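/- arXiv:1111.6924 — 2 statements merged into one kernel-verified Lean document; each statement's English description precedes it below -/
import Mathlib

section
/- Let Λ be a countable finitely aligned category of paths, v a vertex, and C ∈ vΛ*. Then C lies in the closure of vΛ** in X_v if and only if for every α ∈ C there exists α' ∈ C ∩ αΛ such that σ^{α'}(C) ∩ F ≠ ∅ for every finite exhaustive subset F ⊆ s(α')Λ, where σ^{α'}(C) = {γ ∈ s(α')Λ : α'γ ∈ C}. -/
universe u v

/-- A category of paths: a small category (objects identified with identity
morphisms) with left and right cancellation and no inverses. -/
structure CategoryOfPaths (Λ : Type u) where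
  s : Λ → Λ
  r : Λ → Λ
  comp : Λ → Λ → Λ
  s_comp : ∀ {α β : Λ}, s α = r β → s (comp α β) = s β
  r_comp : ∀ {α β : Λ}, s α = r β → r (comp α β) = r α
  comp_assoc : ∀ {α β γ : Λ}, s α = r β → s β = r γ →
    comp (comp α β) γ = comp α (comp β γ)
  id_comp : ∀ α : Λ, comp (r α) α = α
  comp_id : ∀ α : Λ, comp α (s α) = α
  s_r : ∀ α : Λ, s (r α) = r α
  r_r : ∀ α : Λ, r (r α) = r α
  r_s : ∀ α : Λ, r (s α) = s α
  s_s : ∀ α : Λ, s (s α) = s α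
  left_cancel : ∀ {α β γ : Λ}, s α = r β → s α = r γ → comp α β = comp α γ → β = γ
  right_cancel : ∀ {β γ α : Λ}, s β = r α → s γ = r α → comp β α = comp γ α → β = γ
  no_inverses : ∀ {α β : Λ}, s α = r β → comp α β = s β → α = s β ∧ β = s β

variable {Λ : Type u}

/-- The tail set `αΛ`. -/
def pTail (C : CategoryOfPaths Λ) (α : Λ) : Set Λ :=
  {x | ∃ β, C.s α = C.r β ∧ x = C.comp α β}

/-- `vΛ`, the paths with range `v`. -/
def pRng (C : CategoryOfPaths Λ) (w : Λ) : Set Λ := {α | C.r α = w}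

/-- `Λv`, the paths with source `v`. -/
def pSrc (C : CategoryOfPaths Λ) (w : Λ) : Set Λ := {α | C.s α = w}

/-- `[β]`, the initial segments of `β`. -/
def pSeg (C : CategoryOfPaths Λ) (β : Λ) : Set Λ := {α | β ∈ pTail C α}

/-- `α ⋔ β`. -/
def pMeets (C : CategoryOfPaths Λ) (α β : Λ) : Prop :=
  (pTail C α ∩ pTail C β).Nonempty

/-- `αE`. -/
def pMulSet (C : CategoryOfPaths Λ) (α : Λ) (E : Set Λ) : Set Λ :=
  {x | ∃ β ∈ E, C.s α = C.r β ∧ x = C.comp α β}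

/-- `σ^α(E ∩ αΛ)`, computed inside an ambient subcategory `S`. -/
def pShiftIn (C : CategoryOfPaths Λ) (S : Set Λ) (α : Λ) (E : Set Λ) : Set Λ :=
  {β | β ∈ S ∧ C.s α = C.r β ∧ C.comp α β ∈ E}

/-- `σ^α(E ∩ αΛ)`. -/
def pShift (C : CategoryOfPaths Λ) (α : Λ) (E : Set Λ) : Set Λ :=
  {β | C.s α = C.r β ∧ C.comp α β ∈ E}

/-- `⋁F`: the minimal common extensions of `F`. -/
def pMinExt (C : CategoryOfPaths Λ) (F : Set Λ) : Set Λ :=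
  {ε | (∀ α ∈ F, ε ∈ pTail C α) ∧
    ∀ γ, (∀ α ∈ F, γ ∈ pTail C α) → ε ∈ pTail C γ → γ = ε}

/-- `α ∨ β`: the minimal common extensions of `α` and `β`. -/
def pMinCE (C : CategoryOfPaths Λ) (α β : Λ) : Set Λ := pMinExt C {α, β}

/-- A subcategory of a category of paths, as a set of morphisms. -/
structure IsSubcategory (C : CategoryOfPaths Λ) (Λ₀ : Set Λ) : Prop where
  comp_mem : ∀ {α β : Λ}, α ∈ Λ₀ → β ∈ Λ₀ → C.s α = C.r β → C.comp α β ∈ Λ₀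
  s_mem : ∀ {α : Λ}, α ∈ Λ₀ → C.s α ∈ Λ₀
  r_mem : ∀ {α : Λ}, α ∈ Λ₀ → C.r α ∈ Λ₀

/-- A finitely aligned category of paths. -/
def FinitelyAligned (C : CategoryOfPaths Λ) : Prop :=
  ∀ α β : Λ, ∃ G : Set Λ, G.Finite ∧
    pTail C α ∩ pTail C β = ⋃ ε ∈ G, pTail C ε

/-- A finitely aligned relative category of paths `(Λ₀, Λ)`. -/
def RelFinitelyAligned (C : CategoryOfPaths Λ) (Λ₀ : Set Λ) : Prop :=
  (∀ α ∈ Λ₀, ∀ β ∈ Λ₀, ∃ G : Set Λ, G.Finite ∧ G ⊆ Λ₀ ∧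
      pTail C α ∩ pTail C β = ⋃ ε ∈ G, pTail C ε) ∧
  (∀ α ∈ Λ₀, pTail C α ∩ Λ₀ = pMulSet C α Λ₀)

/-- A ring of sets: contains `∅` and is closed under `∪`, `∩`, and `\`. -/
def IsSetRing {γ : Type v} (R : Set (Set γ)) : Prop :=
  ∅ ∈ R ∧ (∀ E ∈ R, ∀ F ∈ R, E ∪ F ∈ R) ∧ (∀ E ∈ R, ∀ F ∈ R, E ∩ F ∈ R) ∧
    (∀ E ∈ R, ∀ F ∈ R, E \ F ∈ R)

/-- A ring of sets on `S`: a ring of sets all of whose members are subsets of `S`. -/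
def IsSetRingOn {γ : Type v} (S : Set γ) (R : Set (Set γ)) : Prop :=
  IsSetRing R ∧ ∀ E ∈ R, E ⊆ S

/-- The ring of sets generated by a collection. -/
def setRingGen {γ : Type v} (G : Set (Set γ)) : Set (Set γ) :=
  ⋂₀ {R | IsSetRing R ∧ G ⊆ R}

/-- The ring of sets on `S` generated by a collection. -/
def setRingGenOn {γ : Type v} (S : Set γ) (G : Set (Set γ)) : Set (Set γ) :=
  ⋂₀ {R | IsSetRingOn S R ∧ G ⊆ R}

/-- A zigzag: a list of pairs `(αᵢ, βᵢ)` with `r αᵢ = r βᵢ` and `s αᵢ₊₁ = s βᵢ`. -/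
def IsZigzag (C : CategoryOfPaths Λ) (l : List (Λ × Λ)) : Prop :=
  (∀ p ∈ l, C.r p.1 = C.r p.2) ∧ l.Chain' (fun p q => C.s q.1 = C.s p.2)

/-- The (graph of the) zigzag map `φ_ζ = σ^{α₁} β₁ ⋯ σ^{αₙ} βₙ`, computed
inside an ambient subcategory `S`. -/
def zigzagRelIn (C : CategoryOfPaths Λ) (S : Set Λ) : List (Λ × Λ) → Λ → Λ → Prop
  | [], x, y => x = y ∧ x ∈ S
  | p :: rest, x, y => ∃ z, zigzagRelIn C S rest x z ∧ C.s p.2 = C.r z ∧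
      C.s p.1 = C.r y ∧ y ∈ S ∧ C.comp p.2 z = C.comp p.1 y

/-- `A(ζ)`: the domain of the zigzag map. -/
def zigzagDomIn (C : CategoryOfPaths Λ) (S : Set Λ) (l : List (Λ × Λ)) : Set Λ :=
  {x | ∃ y, zigzagRelIn C S l x y}

/-- `𝒟(Λ₀,Λ)⁰_v`: nonempty zigzag sets with entries in `Λ₀` and source `v`,
computed inside the ambient subcategory `S`. -/
def relD0 (C : CategoryOfPaths Λ) (Λ₀ S : Set Λ) (w : Λ) : Set (Set Λ) :=
  {E | E.Nonempty ∧ ∃ (l : List (Λ × Λ)) (h : l ≠ []),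
    IsZigzag C l ∧ (∀ p ∈ l, p.1 ∈ Λ₀ ∧ p.2 ∈ Λ₀) ∧
    C.s (l.getLast h).2 = w ∧ E = zigzagDomIn C S l}

/-- `𝒜(Λ₀,Λ)_v`: the ring of sets generated by the zigzag sets. -/
def relAring (C : CategoryOfPaths Λ) (Λ₀ S : Set Λ) (w : Λ) : Set (Set Λ) :=
  setRingGenOn {α | α ∈ S ∧ C.r α = w} (relD0 C Λ₀ S w)

/-- A filter in a ring of sets. -/
def IsFilterIn {γ : Type v} (R U : Set (Set γ)) : Prop :=
  U.Nonempty ∧ U ⊆ R ∧ (∀ E ∈ U, E.Nonempty) ∧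
    (∀ E ∈ U, ∀ F ∈ U, E ∩ F ∈ U) ∧ (∀ E ∈ U, ∀ F ∈ R, E ⊆ F → F ∈ U)

/-- An ultrafilter in a ring of sets: a maximal filter. -/
def IsUltrafilterIn {γ : Type v} (R U : Set (Set γ)) : Prop :=
  IsFilterIn R U ∧ ∀ V, IsFilterIn R V → U ⊆ V → V = U

/-- A filter base in a ring of sets. -/
def IsFilterBaseIn {γ : Type v} (R B : Set (Set γ)) : Prop :=
  B.Nonempty ∧ B ⊆ R ∧ (∀ E ∈ B, E.Nonempty) ∧
    ∀ E ∈ B, ∀ F ∈ B, ∃ G ∈ B, G ⊆ E ∩ F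

/-- The filter generated by a filter base. -/
def filterGenBy {γ : Type v} (R B : Set (Set γ)) : Set (Set γ) :=
  {E | E ∈ R ∧ ∃ F ∈ B, F ⊆ E}

/-- An ultrafilter base in a ring of sets. -/
def IsUltrafilterBaseIn {γ : Type v} (R B : Set (Set γ)) : Prop :=
  IsFilterBaseIn R B ∧ IsUltrafilterIn R (filterGenBy R B)

/-- A Boolean ring homomorphism defined on a ring of sets `A` with values in a
generalized Boolean algebra. -/
def IsBRHomOn {γ : Type v} {R : Type*} [GeneralizedBooleanAlgebra R]
    (A : Set (Set γ)) (ν : Set γ → R) : Prop :=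
  ν ∅ = ⊥ ∧ (∀ E ∈ A, ∀ F ∈ A, ν (E ∪ F) = ν E ⊔ ν F) ∧
    (∀ E ∈ A, ∀ F ∈ A, ν (E ∩ F) = ν E ⊓ ν F) ∧
    (∀ E ∈ A, ∀ F ∈ A, ν (E \ F) = ν E \ ν F)

/-- `𝒜_v`: the ring of sets on `vΛ` generated by the tail sets. -/
def tailRing (C : CategoryOfPaths Λ) (w : Λ) : Set (Set Λ) :=
  setRingGenOn (pRng C w) {E | ∃ α, C.r α = w ∧ E = pTail C α}

/-- A directed subset. -/
def pDirected (C : CategoryOfPaths Λ) (x : Set Λ) : Prop :=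
  ∀ α ∈ x, ∀ β ∈ x, (pTail C α ∩ pTail C β ∩ x).Nonempty

/-- A hereditary subset. -/
def pHereditary (C : CategoryOfPaths Λ) (x : Set Λ) : Prop :=
  ∀ γ ∈ x, ∀ α : Λ, γ ∈ pTail C α → α ∈ x

/-- `vΛ*`: the nonempty directed hereditary subsets of `vΛ`. -/
def lamStar (C : CategoryOfPaths Λ) (w : Λ) : Set (Set Λ) :=
  {x | x.Nonempty ∧ x ⊆ pRng C w ∧ pDirected C x ∧ pHereditary C x}

/-- `vΛ**`: the maximal directed subsets of `vΛ`. -/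
def lamStarStar (C : CategoryOfPaths Λ) (w : Λ) : Set (Set Λ) :=
  {x | x ⊆ pRng C w ∧ pDirected C x ∧
    ∀ y, y ⊆ pRng C w → pDirected C y → x ⊆ y → y = x}

/-- `αx = ⋃_{γ ∈ x} [αγ]` for `x ∈ s(α)Λ*`. -/
def pMulStar (C : CategoryOfPaths Λ) (α : Λ) (x : Set Λ) : Set Λ :=
  {δ | ∃ γ ∈ x, C.s α = C.r γ ∧ C.comp α γ ∈ pTail C δ}

/-- `𝒰_{C,0}`. -/
def UC0 (C : CategoryOfPaths Λ) (w : Λ) (x : Set Λ) : Set (Set Λ) :=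
  {E | E ∈ tailRing C w ∧ ∃ α ∈ x, pTail C α ⊆ E}

/-- `𝒰_C`. -/
def UC (C : CategoryOfPaths Λ) (w : Λ) (x : Set Λ) : Set (Set Λ) :=
  {E | E ∈ tailRing C w ∧ ∃ α ∈ x, x ∩ pTail C α ⊆ E}

/-- `X_v = vΛ*` as a type. -/
abbrev Xv (C : CategoryOfPaths Λ) (w : Λ) : Type u := {x : Set Λ // x ∈ lamStar C w}

/-- The topology on `X_v` generated by the sets `Ê`, `E ∈ 𝒜_v`. -/
def XvTop (C : CategoryOfPaths Λ) (w : Λ) : TopologicalSpace (Xv C w) :=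
  TopologicalSpace.generateFrom
    {t | ∃ E ∈ tailRing C w, t = {x : Xv C w | E ∈ UC C w x.1}}

/-- The vertices of `Λ`. -/
abbrev Vertex (C : CategoryOfPaths Λ) : Type u := {w : Λ // C.r w = w}

/-- `X`: the disjoint union of the spaces `X_v`. -/
abbrev Xtotal (C : CategoryOfPaths Λ) : Type u := Σ w : Vertex C, Xv C w.1

/-- The disjoint union topology on `X`. -/
def XtotalTop (C : CategoryOfPaths Λ) : TopologicalSpace (Xtotal C) :=
  letI : ∀ w : Vertex C, TopologicalSpace (Xv C w.1) := fun w => XvTop C w.1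
  inferInstance

/-- The boundary `∂Λ`: the closure of `Λ**` in `X`. -/
def boundarySet (C : CategoryOfPaths Λ) : Set (Xtotal C) :=
  @closure _ (XtotalTop C) {p : Xtotal C | p.2.1 ∈ lamStarStar C p.1.1}

/-- An exhaustive subset of `vΛ`. -/
def ExhaustiveAt (C : CategoryOfPaths Λ) (w : Λ) (F : Set Λ) : Prop :=
  ∀ α, C.r α = w → ∃ β ∈ F, pMeets C α β

/-- An aperiodic point of `Λ*`. -/
def pAperiodic (C : CategoryOfPaths Λ) (x : Set Λ) : Prop :=
  ∀ α ∈ x, ∀ β ∈ x, α ≠ β → pShift C α x ≠ pShift C β x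

/-- A right-aperiodic point of `wΛ*`. -/
def pRightAperiodicAt (C : CategoryOfPaths Λ) (w : Λ) (x : Set Λ) : Prop :=
  ∀ α β : Λ, C.s α = w → C.s β = w → α ≠ β → pMulStar C α x ≠ pMulStar C β x

/-- The triples `(α, β, x)` with `s α = s β` and `x ∈ s(α)Λ*`. -/
abbrev pTrip (C : CategoryOfPaths Λ) : Type u :=
  {t : Λ × Λ × Set Λ // C.s t.1 = C.s t.2.1 ∧ t.2.2 ∈ lamStar C (C.s t.1)}

/-- The groupoid equivalence relation on triples. -/
def tripRel (C : CategoryOfPaths Λ) (t t' : pTrip C) : Prop :=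
  ∃ (z : Set Λ) (δ δ' : Λ),
    z ∈ lamStar C (C.s δ) ∧ z ∈ lamStar C (C.s δ') ∧
    C.s t.1.1 = C.r δ ∧ C.s t'.1.1 = C.r δ' ∧
    t.1.2.2 = pMulStar C δ z ∧ t'.1.2.2 = pMulStar C δ' z ∧
    C.comp t.1.1 δ = C.comp t'.1.1 δ' ∧
    C.comp t.1.2.1 δ = C.comp t'.1.2.1 δ'

/-- The ultrafilter space of `𝒜(Λ₀,Λ)_v`. -/
abbrev relXv (C : CategoryOfPaths Λ) (Λ₀ : Set Λ) (w : Λ) : Type u :=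
  {U : Set (Set Λ) // IsUltrafilterIn (relAring C Λ₀ Set.univ w) U}

/-- The topology on the ultrafilter space of `𝒜(Λ₀,Λ)_v` generated by the `Ê`. -/
def relXvTop (C : CategoryOfPaths Λ) (Λ₀ : Set Λ) (w : Λ) :
    TopologicalSpace (relXv C Λ₀ w) :=
  TopologicalSpace.generateFrom
    {t | ∃ E ∈ relAring C Λ₀ Set.univ w, t = {U : relXv C Λ₀ w | E ∈ U.1}}

/-!
Finite alignment makes the sets `βΛ \ ⋃_{γ ∈ G} γΛ`, with `β ∈ x` and `G` a finite set of
paths outside `x`, a neighbourhood base at `x ∈ X_v`.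

The key fact is that a maximal directed set `z` meets every finite exhaustive set `F`: by
countability `z` has a cofinal chain `c₀, c₁, …`; the finite sets `M_n` with
`c_nΛ ∩ ⋃_{γ ∈ F} γΛ = ⋃_{ε ∈ M_n} εΛ` form an inverse system, a thread through it exists by
Kőnig's lemma, and maximality absorbs the thread into `z`. Shifts of maximal sets are maximal,
so if `σ^α(x)` misses a finite exhaustive `F`, no maximal set lies in the neighbourhood
`αΛ \ ⋃_{γ ∈ F} αγΛ` of `x`.

Conversely, take a basic neighbourhood `βΛ \ ⋃_{γ ∈ G} γΛ` of `x` and `α' ∈ x ∩ βΛ` from the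
condition. The finite set `P` with `α'Λ ∩ ⋃_{γ ∈ G} γΛ = ⋃_{π ∈ P} α'πΛ` is missed by
`σ^{α'}(x)`, hence is not exhaustive; if `e` meets no path of `P` and `z` is a maximal directed
set containing `e`, then `α'z` is a maximal point of the neighbourhood.
-/

section Paths

variable {C : CategoryOfPaths Λ}

theorem mem_pTail_self (C : CategoryOfPaths Λ) (α : Λ) : α ∈ pTail C α :=
  ⟨C.s α, (C.r_s α).symm, (C.comp_id α).symm⟩

theorem comp_mem_pTail {a b : Λ} (h : C.s a = C.r b) : C.comp a b ∈ pTail C a :=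
  ⟨b, h, rfl⟩

theorem mem_pTail_of_r_eq {w p : Λ} (hp : C.r p = w) : p ∈ pTail C w := by
  subst hp
  exact ⟨p, C.s_r p, (C.id_comp p).symm⟩

theorem r_eq_of_mem_pTail {a x : Λ} (h : x ∈ pTail C a) : C.r x = C.r a := by
  obtain ⟨b, hb, rfl⟩ := h
  exact C.r_comp hb

theorem mem_pTail_trans {a b x : Λ} (hx : x ∈ pTail C b) (hb : b ∈ pTail C a) :
    x ∈ pTail C a := by
  obtain ⟨t, ht, rfl⟩ := hx
  obtain ⟨u, hu, rfl⟩ := hb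
  have ht' : C.s u = C.r t := by rwa [C.s_comp hu] at ht
  exact ⟨C.comp u t, by rw [C.r_comp ht']; exact hu, C.comp_assoc hu ht'⟩

theorem comp_mem_pTail_comp {a b c : Λ} (h : C.s a = C.r b) (hc : c ∈ pTail C b) :
    C.comp a c ∈ pTail C (C.comp a b) := by
  obtain ⟨t, ht, rfl⟩ := hc
  rw [← C.comp_assoc h ht]
  exact comp_mem_pTail (by rw [C.s_comp h]; exact ht)

theorem exists_eq_comp_of_mem_pTail_comp {a b m : Λ} (h : C.s a = C.r b)
    (hm : m ∈ pTail C (C.comp a b)) :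
    ∃ b' ∈ pTail C b, C.s a = C.r b' ∧ m = C.comp a b' := by
  obtain ⟨t, ht, rfl⟩ := hm
  have ht' : C.s b = C.r t := by rwa [C.s_comp h] at ht
  exact ⟨C.comp b t, comp_mem_pTail ht', by rw [C.r_comp ht']; exact h,
    C.comp_assoc h ht'⟩

theorem mem_pTail_of_comp_mem_pTail_comp {a b c : Λ} (hb : C.s a = C.r b)
    (hc : C.s a = C.r c) (h : C.comp a b ∈ pTail C (C.comp a c)) : b ∈ pTail C c := by
  obtain ⟨b', hb', hab', heq⟩ := exists_eq_comp_of_mem_pTail_comp hc h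
  rwa [C.left_cancel hb hab' heq]

theorem mem_pTail_of_le {e : ℕ → Λ} (he : ∀ n, e (n + 1) ∈ pTail C (e n)) {m k : ℕ}
    (hmk : m ≤ k) : e k ∈ pTail C (e m) := by
  induction hmk with
  | refl => exact mem_pTail_self C _
  | step _ ih => exact mem_pTail_trans (he _) ih

end Paths

section Directed

variable {C : CategoryOfPaths Λ}

theorem pDirected_singleton (C : CategoryOfPaths Λ) (a : Λ) : pDirected C {a} := by
  rintro p hp q hq
  rw [Set.mem_singleton_iff] at hp hq
  rw [hp, hq]
  exact ⟨a, ⟨mem_pTail_self C a, mem_pTail_self C a⟩, rfl⟩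

theorem pDirected_insert {z : Set Λ} {a γ : Λ} (hz : pDirected C z) (hγ : γ ∈ z)
    (ha : γ ∈ pTail C a) : pDirected C (insert a z) := by
  have key : ∀ p ∈ z, (pTail C a ∩ pTail C p ∩ insert a z).Nonempty := fun p hp =>
    let ⟨m, ⟨hmγ, hmp⟩, hmz⟩ := hz γ hγ p hp
    ⟨m, ⟨mem_pTail_trans hmγ ha, hmp⟩, Or.inr hmz⟩
  rintro p (hpa | hp) q (hqa | hq)
  · subst hpa hqa
    exact ⟨γ, ⟨ha, ha⟩, Or.inr hγ⟩
  · subst hpa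
    exact key q hq
  · subst hqa
    exact (key p hp).mono fun m hm => ⟨⟨hm.1.2, hm.1.1⟩, hm.2⟩
  · obtain ⟨m, hm, hmz⟩ := hz p hp q hq
    exact ⟨m, hm, Or.inr hmz⟩

theorem pHereditary_of_mem_lamStarStar {w : Λ} {z : Set Λ} (hz : z ∈ lamStarStar C w) :
    pHereditary C z := by
  intro γ hγ a ha
  have hsub : insert a z ⊆ pRng C w := Set.insert_subset
    ((r_eq_of_mem_pTail ha).symm.trans (hz.1 hγ)) hz.1
  rw [← hz.2.2 _ hsub (pDirected_insert hz.2.1 hγ ha) (Set.subset_insert a z)]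
  exact Set.mem_insert a z

theorem vertex_mem_of_mem_lamStarStar {w : Λ} {z : Set Λ} (hw : C.r w = w)
    (hz : z ∈ lamStarStar C w) : w ∈ z := by
  obtain ⟨γ, hγ⟩ : z.Nonempty := by
    rw [Set.nonempty_iff_ne_empty]
    rintro rfl
    simpa using hz.2.2 {w} (by simpa [pRng] using hw) (pDirected_singleton C w)
      (Set.empty_subset _)
  exact pHereditary_of_mem_lamStarStar hz γ hγ w (mem_pTail_of_r_eq (hz.1 hγ))

theorem mem_lamStar_of_mem_lamStarStar {w : Λ} {z : Set Λ} (hw : C.r w = w)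
    (hz : z ∈ lamStarStar C w) : z ∈ lamStar C w :=
  ⟨⟨w, vertex_mem_of_mem_lamStarStar hw hz⟩, hz.1, hz.2.1, pHereditary_of_mem_lamStarStar hz⟩

theorem exists_mem_lamStarStar_superset {w : Λ} {t : Set Λ} (ht : t ⊆ pRng C w)
    (htd : pDirected C t) : ∃ z ∈ lamStarStar C w, t ⊆ z := by
  let S : Set (Set Λ) := {s | s ⊆ pRng C w ∧ pDirected C s}
  have hchain : ∀ c ⊆ S, IsChain (· ⊆ ·) c → c.Nonempty → ∃ ub ∈ S, ∀ s ∈ c, s ⊆ ub := by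
    refine fun c hcS hc _ => ⟨⋃₀ c, ⟨Set.sUnion_subset fun s hs => (hcS hs).1, ?_⟩,
      fun s hs => Set.subset_sUnion_of_mem hs⟩
    rintro a ⟨sa, hsa, ha⟩ b ⟨sb, hsb, hb⟩
    obtain ⟨s, hs, has, hbs⟩ : ∃ s ∈ c, a ∈ s ∧ b ∈ s := by
      rcases hc.total hsa hsb with h | h
      exacts [⟨sb, hsb, h ha, hb⟩, ⟨sa, hsa, ha, h hb⟩]
    obtain ⟨m, hm, hms⟩ := (hcS hs).2 a has b hbs
    exact ⟨m, hm, s, hs, hms⟩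
  obtain ⟨z, htz, hmax⟩ := zorn_subset_nonempty S hchain t ⟨ht, htd⟩
  exact ⟨z, ⟨hmax.prop.1, hmax.prop.2, fun y hy hyd hzy => hmax.eq_of_ge ⟨hy, hyd⟩ hzy⟩, htz⟩

end Directed

section ShiftMul

variable {C : CategoryOfPaths Λ}

theorem pShift_subset_pRng (a : Λ) (y : Set Λ) : pShift C a y ⊆ pRng C (C.s a) :=
  fun _ hb => hb.1.symm

theorem pShift_directed {y : Set Λ} (hy : pDirected C y) (a : Λ) :
    pDirected C (pShift C a y) := by
  rintro b ⟨hb, hby⟩ c ⟨hc, hcy⟩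
  obtain ⟨m, ⟨hmb, hmc⟩, hmy⟩ := hy _ hby _ hcy
  obtain ⟨b', hb', hab', rfl⟩ := exists_eq_comp_of_mem_pTail_comp hb hmb
  exact ⟨b', ⟨hb', mem_pTail_of_comp_mem_pTail_comp hab' hc hmc⟩, hab', hmy⟩

theorem comp_mem_pMulStar {a γ : Λ} {z : Set Λ} (hγ : γ ∈ z) (h : C.s a = C.r γ) :
    C.comp a γ ∈ pMulStar C a z :=
  ⟨γ, hγ, h, mem_pTail_self C _⟩

theorem pMulStar_subset_pRng {a : Λ} (z : Set Λ) : pMulStar C a z ⊆ pRng C (C.r a) := by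
  rintro δ ⟨γ, -, h, hδ⟩
  exact (r_eq_of_mem_pTail hδ).symm.trans (C.r_comp h)

theorem pMulStar_directed {z : Set Λ} (hz : pDirected C z) (a : Λ) :
    pDirected C (pMulStar C a z) := by
  rintro b ⟨γb, hγb, hb, hab⟩ c ⟨γc, hγc, hc, hac⟩
  obtain ⟨m, ⟨hmb, hmc⟩, hmz⟩ := hz γb hγb γc hγc
  have ham : C.s a = C.r m := hb.trans (r_eq_of_mem_pTail hmb).symm
  exact ⟨C.comp a m, ⟨mem_pTail_trans (comp_mem_pTail_comp hb hmb) hab,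
    mem_pTail_trans (comp_mem_pTail_comp hc hmc) hac⟩, comp_mem_pMulStar hmz ham⟩

theorem exists_eq_comp_of_mem_pMulStar {a δ : Λ} {z : Set Λ} (hz : pHereditary C z)
    (hδ : δ ∈ pMulStar C a z) (hδa : δ ∈ pTail C a) :
    ∃ ρ ∈ z, C.s a = C.r ρ ∧ δ = C.comp a ρ := by
  obtain ⟨γ, hγ, hγa, hγδ⟩ := hδ
  obtain ⟨ρ, hρ, rfl⟩ := hδa
  exact ⟨ρ, hz γ hγ ρ (mem_pTail_of_comp_mem_pTail_comp hγa hρ hγδ), hρ, rfl⟩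

theorem self_mem_pMulStar {a : Λ} {z : Set Λ} (hz : z ∈ lamStarStar C (C.s a)) :
    a ∈ pMulStar C a z := by
  simpa only [C.comp_id] using
    comp_mem_pMulStar (vertex_mem_of_mem_lamStarStar (C.r_s a) hz) (C.r_s a).symm

theorem pMulStar_mem_lamStarStar {a : Λ} {z : Set Λ} (hz : z ∈ lamStarStar C (C.s a)) :
    pMulStar C a z ∈ lamStarStar C (C.r a) := by
  refine ⟨pMulStar_subset_pRng z, pMulStar_directed hz.2.1 a, fun y hy hyd hzy => ?_⟩
  have hshift : pShift C a y = z := hz.2.2 _ (pShift_subset_pRng a y) (pShift_directed hyd a)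
    fun γ hγ => ⟨(hz.1 hγ).symm, hzy (comp_mem_pMulStar hγ (hz.1 hγ).symm)⟩
  refine (Set.Subset.antisymm ?_ hzy)
  intro ξ hξ
  obtain ⟨m, ⟨hmξ, ρ, hρ, rfl⟩, hmy⟩ := hyd ξ hξ a (hzy (self_mem_pMulStar hz))
  exact ⟨ρ, hshift ▸ ⟨hρ, hmy⟩, hρ, hmξ⟩

theorem pShift_mem_lamStarStar {v β : Λ} {y : Set Λ} (hy : y ∈ lamStarStar C v)
    (hβ : β ∈ y) : pShift C β y ∈ lamStarStar C (C.s β) := by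
  refine ⟨pShift_subset_pRng β y, pShift_directed hy.2.1 β, fun z hz hzd hyz => ?_⟩
  obtain ⟨z', hz', hzz'⟩ := exists_mem_lamStarStar_superset hz hzd
  have hrβ : C.r β = v := hy.1 hβ
  have hy_eq : pMulStar C β z' = y := by
    refine hy.2.2 _ (hrβ ▸ pMulStar_subset_pRng z') (pMulStar_directed hz'.2.1 β) ?_
    intro ξ hξ
    obtain ⟨m, ⟨hmξ, ρ, hρ, rfl⟩, hmy⟩ := hy.2.1 ξ hξ β hβ
    exact ⟨ρ, hzz' (hyz ⟨hρ, hmy⟩), hρ, hmξ⟩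
  refine Set.Subset.antisymm (fun γ hγ => ?_) hyz
  have hγ' : γ ∈ z' := hzz' hγ
  exact ⟨(hz'.1 hγ').symm, hy_eq ▸ comp_mem_pMulStar hγ' (hz'.1 hγ').symm⟩

end ShiftMul

section TailRing

variable {C : CategoryOfPaths Λ} {w : Λ}

theorem pTail_mem_tailRing {a : Λ} (ha : C.r a = w) : pTail C a ∈ tailRing C w :=
  fun _ hR => hR.2 ⟨a, ha, rfl⟩

theorem empty_mem_tailRing : (∅ : Set Λ) ∈ tailRing C w :=
  fun _ hR => hR.1.1.1

theorem union_mem_tailRing {E F : Set Λ} (hE : E ∈ tailRing C w) (hF : F ∈ tailRing C w) :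
    E ∪ F ∈ tailRing C w :=
  fun R hR => hR.1.1.2.1 E (hE R hR) F (hF R hR)

theorem inter_mem_tailRing {E F : Set Λ} (hE : E ∈ tailRing C w) (hF : F ∈ tailRing C w) :
    E ∩ F ∈ tailRing C w :=
  fun R hR => hR.1.1.2.2.1 E (hE R hR) F (hF R hR)

theorem diff_mem_tailRing {E F : Set Λ} (hE : E ∈ tailRing C w) (hF : F ∈ tailRing C w) :
    E \ F ∈ tailRing C w :=
  fun R hR => hR.1.1.2.2.2 E (hE R hR) F (hF R hR)

theorem biUnion_mem_tailRing {G : Set Λ} (hG : G.Finite) {T : Λ → Set Λ}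
    (hT : ∀ γ ∈ G, T γ ∈ tailRing C w) : (⋃ γ ∈ G, T γ) ∈ tailRing C w := by
  induction G, hG using Set.Finite.induction_on with
  | empty => simpa using empty_mem_tailRing
  | @insert a G _ _ ih =>
    rw [Set.biUnion_insert]
    exact union_mem_tailRing (hT a (Set.mem_insert a G))
      (ih fun γ hγ => hT γ (Set.mem_insert_of_mem a hγ))

theorem tailRing_induction (P : Set Λ → Prop)
    (tail : ∀ a, C.r a = w → P (pTail C a)) (empty : P ∅)
    (union : ∀ E F, P E → P F → P (E ∪ F)) (inter : ∀ E F, P E → P F → P (E ∩ F))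
    (diff : ∀ E F, P E → P F → P (E \ F)) {E : Set Λ} (hE : E ∈ tailRing C w) : P E := by
  refine (hE {E | P E ∧ E ⊆ pRng C w} ⟨⟨⟨⟨empty, Set.empty_subset _⟩, ?_, ?_, ?_⟩,
    fun E hE => hE.2⟩, ?_⟩).1
  · exact fun E hE F hF => ⟨union E F hE.1 hF.1, Set.union_subset hE.2 hF.2⟩
  · exact fun E hE F hF => ⟨inter E F hE.1 hF.1, Set.inter_subset_left.trans hE.2⟩
  · exact fun E hE F hF => ⟨diff E F hE.1 hF.1, Set.sdiff_subset.trans hE.2⟩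
  · rintro _ ⟨a, ha, rfl⟩
    exact ⟨tail a ha, fun _ hx => (r_eq_of_mem_pTail hx).trans ha⟩

theorem pTail_mem_UC {x : Set Λ} (hx : x ⊆ pRng C w) {a : Λ} (ha : a ∈ x) :
    pTail C a ∈ UC C w x :=
  ⟨pTail_mem_tailRing (hx ha), a, ha, Set.inter_subset_right⟩

theorem UC_mono {x E F : Set Λ} (hE : E ∈ UC C w x) (hEF : E ⊆ F) (hF : F ∈ tailRing C w) :
    F ∈ UC C w x :=
  let ⟨_, a, ha, haE⟩ := hE
  ⟨hF, a, ha, haE.trans hEF⟩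

theorem inter_mem_UC {x E F : Set Λ} (hx : pDirected C x) (hE : E ∈ UC C w x)
    (hF : F ∈ UC C w x) : E ∩ F ∈ UC C w x := by
  obtain ⟨hE, a, ha, haE⟩ := hE
  obtain ⟨hF, b, hb, hbF⟩ := hF
  obtain ⟨m, ⟨hma, hmb⟩, hm⟩ := hx a ha b hb
  exact ⟨inter_mem_tailRing hE hF, m, hm, fun p hp =>
    ⟨haE ⟨hp.1, mem_pTail_trans hp.2 hma⟩, hbF ⟨hp.1, mem_pTail_trans hp.2 hmb⟩⟩⟩

theorem mem_closure_iff_forall_mem_UC {S : Set (Xv C w)} {p : Xv C w} :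
    p ∈ @closure _ (XvTop C w) S ↔ ∀ E ∈ UC C w p.1, ∃ q ∈ S, E ∈ UC C w q.1 := by
  let _ := XvTop C w
  have hbasis := TopologicalSpace.isTopologicalBasis_of_subbasis_of_inter
    (r := {t | ∃ E ∈ tailRing C w, t = {x : Xv C w | E ∈ UC C w x.1}}) rfl (by
    rintro _ ⟨E, hE, rfl⟩ _ ⟨F, hF, rfl⟩
    refine ⟨E ∩ F, inter_mem_tailRing hE hF, Set.ext fun q => ⟨fun hq => ?_, fun hq => ?_⟩⟩
    · exact inter_mem_UC q.2.2.2.1 hq.1 hq.2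
    · exact ⟨UC_mono hq Set.inter_subset_left hE, UC_mono hq Set.inter_subset_right hF⟩)
  rw [hbasis.mem_closure_iff]
  constructor
  · intro h E hE
    obtain ⟨q, hq, hqS⟩ := h _ (Set.mem_insert_of_mem _ ⟨E, hE.1, rfl⟩) hE
    exact ⟨q, hqS, hq⟩
  · rintro h o (rfl | ⟨E, -, rfl⟩) hpo
    · obtain ⟨a, ha⟩ := p.2.1
      obtain ⟨q, hqS, -⟩ := h _ (pTail_mem_UC p.2.2.1 ha)
      exact ⟨q, trivial, hqS⟩
    · obtain ⟨q, hqS, hq⟩ := h E hpo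
      exact ⟨q, hq, hqS⟩

end TailRing

def ContainsBasicSet (C : CategoryOfPaths Λ) (x E : Set Λ) : Prop :=
  ∃ β ∈ x, ∃ G : Set Λ, G.Finite ∧ (∀ γ ∈ G, γ ∉ x) ∧ pTail C β \ ⋃ γ ∈ G, pTail C γ ⊆ E

namespace ContainsBasicSet

variable {C : CategoryOfPaths Λ} {x E F : Set Λ}

theorem mono (hE : ContainsBasicSet C x E) (hEF : E ⊆ F) : ContainsBasicSet C x F :=
  let ⟨β, hβ, G, hG, hGx, hβE⟩ := hE
  ⟨β, hβ, G, hG, hGx, hβE.trans hEF⟩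

theorem inter (hx : pDirected C x) (hE : ContainsBasicSet C x E)
    (hF : ContainsBasicSet C x F) : ContainsBasicSet C x (E ∩ F) := by
  obtain ⟨β, hβ, G, hG, hGx, hβE⟩ := hE
  obtain ⟨β', hβ', G', hG', hG'x, hβ'F⟩ := hF
  obtain ⟨m, ⟨hmβ, hmβ'⟩, hm⟩ := hx β hβ β' hβ'
  refine ⟨m, hm, G ∪ G', hG.union hG', fun γ hγ => hγ.elim (hGx γ) (hG'x γ), ?_⟩
  rintro p ⟨hpm, hpG⟩
  simp only [Set.mem_iUnion, Set.mem_union, not_exists, or_imp, forall_and] at hpG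
  exact ⟨hβE ⟨mem_pTail_trans hpm hmβ, by simpa using hpG.1⟩,
    hβ'F ⟨mem_pTail_trans hpm hmβ', by simpa using hpG.2⟩⟩

theorem of_mem {α : Λ} (hα : α ∈ x) : ContainsBasicSet C x (pTail C α) :=
  ⟨α, hα, ∅, Set.finite_empty, by simp, Set.sdiff_subset⟩

theorem nonempty_inter (hx : pHereditary C x) (hE : ContainsBasicSet C x E) :
    (x ∩ E).Nonempty := by
  obtain ⟨β, hβ, G, -, hGx, hβE⟩ := hE
  refine ⟨β, hβ, hβE ⟨mem_pTail_self C β, fun hβG => ?_⟩⟩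
  obtain ⟨γ, hγ, hβγ⟩ := Set.mem_iUnion₂.1 hβG
  exact hGx γ hγ (hx β hβ γ hβγ)

end ContainsBasicSet

section BasicSets

variable {C : CategoryOfPaths Λ} {v : Λ} {x : Set Λ}

theorem containsBasicSet_pRng (hx : x ∈ lamStar C v) : ContainsBasicSet C x (pRng C v) :=
  let ⟨_, hβ⟩ := hx.1
  (ContainsBasicSet.of_mem hβ).mono fun _ hp => (r_eq_of_mem_pTail hp).trans (hx.2.1 hβ)

theorem containsBasicSet_or_compl (hx : x ∈ lamStar C v) {E : Set Λ}
    (hE : E ∈ tailRing C v) :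
    ContainsBasicSet C x E ∨ ContainsBasicSet C x (pRng C v \ E) := by
  have hdir := hx.2.2.1
  have hV := containsBasicSet_pRng hx
  refine tailRing_induction
    (fun E => ContainsBasicSet C x E ∨ ContainsBasicSet C x (pRng C v \ E))
    (fun a _ => ?tail) ?empty (fun E F hE hF => ?union) (fun E F hE hF => ?inter)
    (fun E F hE hF => ?diff) hE
  case tail =>
    by_cases ha : a ∈ x
    · exact Or.inl (ContainsBasicSet.of_mem ha)
    · obtain ⟨β, hβ⟩ := hx.1
      refine Or.inr ⟨β, hβ, {a}, Set.finite_singleton a, by simpa using ha, ?_⟩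
      rintro p ⟨hpβ, hpa⟩
      exact ⟨(r_eq_of_mem_pTail hpβ).trans (hx.2.1 hβ), by simpa using hpa⟩
  case empty => exact Or.inr (by simpa using hV)
  case union =>
    rcases hE with hE | hE
    · exact Or.inl (hE.mono Set.subset_union_left)
    rcases hF with hF | hF
    · exact Or.inl (hF.mono Set.subset_union_right)
    · exact Or.inr ((hE.inter hdir hF).mono Set.sdiff_inter_sdiff.subset)
  case inter =>
    rcases hE with hE | hE
    · rcases hF with hF | hF
      · exact Or.inl (hE.inter hdir hF)
      · exact Or.inr (hF.mono (Set.sdiff_subset_sdiff_right Set.inter_subset_right))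
    · exact Or.inr (hE.mono (Set.sdiff_subset_sdiff_right Set.inter_subset_left))
  case diff =>
    rcases hE with hE | hE
    · rcases hF with hF | hF
      · exact Or.inr ((hV.inter hdir hF).mono fun p hp => ⟨hp.1, fun h => h.2 hp.2⟩)
      · exact Or.inl ((hE.inter hdir hF).mono fun p hp => ⟨hp.1, hp.2.2⟩)
    · exact Or.inr (hE.mono (Set.sdiff_subset_sdiff_right Set.sdiff_subset))

theorem containsBasicSet_of_mem_UC (hx : x ∈ lamStar C v) {E : Set Λ} (hE : E ∈ UC C v x) :
    ContainsBasicSet C x E := by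
  refine (containsBasicSet_or_compl hx hE.1).resolve_right fun hcompl => ?_
  obtain ⟨α, hα, hαE⟩ := hE.2
  obtain ⟨m, hmx, hmα, -, hmE⟩ :=
    ((ContainsBasicSet.of_mem hα).inter hx.2.2.1 hcompl).nonempty_inter hx.2.2.2
  exact hmE (hαE ⟨hmx, hmα⟩)

end BasicSets

section FinitelyAligned

variable {C : CategoryOfPaths Λ}

theorem FinitelyAligned.exists_finite_inter_biUnion (hfa : FinitelyAligned C) (α : Λ)
    {F : Set Λ} (hF : F.Finite) :
    ∃ H : Set Λ, H.Finite ∧ pTail C α ∩ ⋃ γ ∈ F, pTail C γ = ⋃ ε ∈ H, pTail C ε := by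
  choose G hG hGeq using hfa α
  refine ⟨⋃ γ ∈ F, G γ, hF.biUnion fun γ _ => hG γ, ?_⟩
  simp only [Set.inter_iUnion₂, hGeq, Set.biUnion_iUnion]

theorem FinitelyAligned.exists_finite_pullback (hfa : FinitelyAligned C) (α : Λ)
    {F : Set Λ} (hF : F.Finite) :
    ∃ P : Set Λ, P.Finite ∧ P ⊆ pRng C (C.s α) ∧
      pTail C α ∩ ⋃ γ ∈ F, pTail C γ = ⋃ π ∈ P, pTail C (C.comp α π) := by
  obtain ⟨H, hH, hHeq⟩ := hfa.exists_finite_inter_biUnion α hF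
  have hH_eq : H = C.comp α '' {π | C.s α = C.r π ∧ C.comp α π ∈ H} := by
    refine Set.Subset.antisymm (fun ε hε => ?_) (Set.image_subset_iff.2 fun π hπ => hπ.2)
    have hεα : ε ∈ pTail C α := by
      have : ε ∈ ⋃ ε ∈ H, pTail C ε := Set.mem_biUnion hε (mem_pTail_self C ε)
      exact (hHeq ▸ this).1
    obtain ⟨π, hπ, rfl⟩ := hεα
    exact ⟨π, ⟨hπ, hε⟩, rfl⟩
  refine ⟨{π | C.s α = C.r π ∧ C.comp α π ∈ H}, ?_, fun π hπ => hπ.1.symm, ?_⟩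
  · exact Set.Finite.of_finite_image (hH_eq ▸ hH) fun π₁ h₁ π₂ h₂ h => C.left_cancel h₁.1 h₂.1 h
  · rw [hHeq, ← Set.biUnion_image (f := C.comp α) (g := pTail C), ← hH_eq]

end FinitelyAligned

section Exhaustive

/-- Kőnig's lemma for a relational inverse system, via compactness of `∏ₙ M n`. -/
theorem exists_seq_rel_of_finite {X : Type*} {M : ℕ → Set X} {R : X → X → Prop}
    (hfin : ∀ n, (M n).Finite) (hne : ∀ n, (M n).Nonempty)
    (hlink : ∀ n, ∀ b ∈ M (n + 1), ∃ a ∈ M n, R b a) :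
    ∃ f : ℕ → X, (∀ n, f n ∈ M n) ∧ ∀ n, R (f (n + 1)) (f n) := by
  let _ : ∀ n, TopologicalSpace (M n) := fun _ => ⊥
  have _ : ∀ n, DiscreteTopology (M n) := fun _ => ⟨rfl⟩
  have _ : ∀ n, Finite (M n) := fun n => (hfin n).to_subtype
  have _ : ∀ n, Nonempty (M n) := fun n => (hne n).to_subtype
  let K : ℕ → Set (∀ n, M n) := fun N => {g | ∀ k < N, R (g (k + 1)) (g k)}
  have hK_closed : ∀ N, IsClosed (K N) := by
    intro N
    simp only [K, Set.ofPred_forall]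
    exact isClosed_iInter fun k => isClosed_iInter fun _ =>
      (isClosed_discrete {p : M (k + 1) × M k | R p.1 p.2}).preimage
        (f := fun g : ∀ n, M n => (g (k + 1), g k)) (by fun_prop)
  have hK_ne : ∀ N, ∀ a : M N, ∃ g ∈ K N, g N = a := by
    intro N
    induction N with
    | zero => exact fun a => ⟨Function.update (fun _ => Classical.arbitrary _) 0 a,
        fun k hk => absurd hk k.not_lt_zero, Function.update_self ..⟩
    | succ N ih =>
      intro a
      obtain ⟨b, hb, hab⟩ := hlink N a a.2
      obtain ⟨g, hg, hgN⟩ := ih ⟨b, hb⟩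
      refine ⟨Function.update g (N + 1) a, fun k hk => ?_, Function.update_self ..⟩
      rcases Nat.lt_succ_iff_lt_or_eq.1 hk with hk | rfl
      · rw [Function.update_of_ne (by omega), Function.update_of_ne (by omega)]
        exact hg k hk
      · rw [Function.update_self, Function.update_of_ne (by omega), hgN]
        exact hab
  obtain ⟨g, hg⟩ := IsCompact.nonempty_iInter_of_sequence_nonempty_isCompact_isClosed K
    (fun N g hg k hk => hg k (Nat.lt_succ_of_lt hk))
    (fun N => (hK_ne N (Classical.arbitrary _)).imp fun g hg => hg.1)
    (hK_closed 0).isCompact hK_closed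
  exact ⟨fun n => g n, fun n => (g n).2, fun n => Set.mem_iInter.1 hg (n + 1) n n.lt_succ_self⟩

variable {C : CategoryOfPaths Λ}

theorem exists_cofinal_chain {z : Set Λ} (hzc : z.Countable) (hzne : z.Nonempty)
    (hz : pDirected C z) :
    ∃ c : ℕ → Λ, (∀ n, c n ∈ z) ∧ (∀ n, c (n + 1) ∈ pTail C (c n)) ∧
      ∀ d ∈ z, ∃ n, c n ∈ pTail C d := by
  obtain ⟨f, rfl⟩ := hzc.exists_eq_range hzne
  choose! next hnext_mem hnext_left hnext_right using fun a (ha : a ∈ Set.range f) n =>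
    let ⟨m, ⟨hma, hmf⟩, hm⟩ := hz a ha (f n) (Set.mem_range_self n)
    (⟨m, hm, hma, hmf⟩ : ∃ m ∈ Set.range f, m ∈ pTail C a ∧ m ∈ pTail C (f n))
  let c : ℕ → Λ := fun n => Nat.rec (f 0) (fun n cn => next cn (n + 1)) n
  have hc : ∀ n, c n ∈ Set.range f := fun n => by
    induction n with
    | zero => exact Set.mem_range_self 0
    | succ n ih => exact hnext_mem _ ih _
  refine ⟨c, hc, fun n => hnext_left _ (hc n) _, ?_⟩
  rintro _ ⟨n, rfl⟩
  cases n with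
  | zero => exact ⟨0, mem_pTail_self C _⟩
  | succ n => exact ⟨n + 1, hnext_right _ (hc n) _⟩

theorem mem_of_chain_above_cofinal {w : Λ} {z : Set Λ} (hz : z ∈ lamStarStar C w)
    {c e : ℕ → Λ} (hcz : ∀ n, c n ∈ z) (hcof : ∀ d ∈ z, ∃ n, c n ∈ pTail C d)
    (he : ∀ n, e (n + 1) ∈ pTail C (e n)) (hec : ∀ n, e n ∈ pTail C (c n)) : e 0 ∈ z := by
  let z' := {a | ∃ n, e n ∈ pTail C a}
  have hz'_dir : pDirected C z' := by
    rintro a ⟨m, hm⟩ b ⟨n, hn⟩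
    exact ⟨e (max m n), ⟨mem_pTail_trans (mem_pTail_of_le he (le_max_left m n)) hm,
      mem_pTail_trans (mem_pTail_of_le he (le_max_right m n)) hn⟩, max m n, mem_pTail_self C _⟩
  have hz'_sub : z' ⊆ pRng C w := by
    rintro a ⟨n, hn⟩
    exact (r_eq_of_mem_pTail hn).symm.trans ((r_eq_of_mem_pTail (hec n)).trans (hz.1 (hcz n)))
  have hzz' : z ⊆ z' := fun d hd =>
    let ⟨n, hn⟩ := hcof d hd
    ⟨n, mem_pTail_trans (hec n) hn⟩
  rw [← hz.2.2 z' hz'_sub hz'_dir hzz']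
  exact ⟨0, mem_pTail_self C _⟩

theorem inter_nonempty_of_exhaustive [Countable Λ] (hfa : FinitelyAligned C) {u : Λ}
    (hu : C.r u = u) {z : Set Λ} (hz : z ∈ lamStarStar C u) {F : Set Λ} (hF : F.Finite)
    (hFex : ExhaustiveAt C u F) : (z ∩ F).Nonempty := by
  obtain ⟨c, hcz, hc, hcof⟩ := exists_cofinal_chain z.to_countable
    ⟨u, vertex_mem_of_mem_lamStarStar hu hz⟩ hz.2.1
  choose M hM hMeq using fun n => hfa.exists_finite_inter_biUnion (c n) hF
  have hM_sub : ∀ n, ∀ ε ∈ M n, ε ∈ pTail C (c n) ∩ ⋃ γ ∈ F, pTail C γ := fun n ε hε =>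
    (hMeq n).symm ▸ Set.mem_biUnion hε (mem_pTail_self C ε)
  have hM_ne : ∀ n, (M n).Nonempty := by
    intro n
    obtain ⟨γ, hγ, m, hmc, hmγ⟩ := hFex (c n) (hz.1 (hcz n))
    have : m ∈ ⋃ ε ∈ M n, pTail C ε := hMeq n ▸ ⟨hmc, Set.mem_biUnion hγ hmγ⟩
    obtain ⟨ε, hε, -⟩ := Set.mem_iUnion₂.1 this
    exact ⟨ε, hε⟩
  have hM_link : ∀ n, ∀ ε' ∈ M (n + 1), ∃ ε ∈ M n, ε' ∈ pTail C ε := by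
    intro n ε' hε'
    obtain ⟨hε'c, hε'F⟩ := hM_sub (n + 1) ε' hε'
    have : ε' ∈ ⋃ ε ∈ M n, pTail C ε := hMeq n ▸ ⟨mem_pTail_trans hε'c (hc n), hε'F⟩
    obtain ⟨ε, hε, hε'ε⟩ := Set.mem_iUnion₂.1 this
    exact ⟨ε, hε, hε'ε⟩
  obtain ⟨e, heM, he⟩ := exists_seq_rel_of_finite hM hM_ne hM_link
  have he0 : e 0 ∈ z :=
    mem_of_chain_above_cofinal hz hcz hcof he fun n => (hM_sub n _ (heM n)).1
  obtain ⟨γ, hγ, he0γ⟩ := Set.mem_iUnion₂.1 (hM_sub 0 (e 0) (heM 0)).2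
  exact ⟨γ, pHereditary_of_mem_lamStarStar hz _ he0 γ he0γ, hγ⟩

end Exhaustive

section Closure

variable {C : CategoryOfPaths Λ} {v : Λ}

theorem sdiff_biUnion_mem_UC {α : Λ} {x F : Set Λ} (hx : x ∈ lamStar C v) (hα : α ∈ x)
    (hFsub : F ⊆ pRng C (C.s α)) (hF : F.Finite) (hdisj : pShift C α x ∩ F = ∅) :
    pTail C α \ ⋃ γ ∈ F, pTail C (C.comp α γ) ∈ UC C v x := by
  have hαv : C.r α = v := hx.2.1 hα
  refine ⟨diff_mem_tailRing (pTail_mem_tailRing hαv) (biUnion_mem_tailRing hF fun γ hγ =>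
    pTail_mem_tailRing ((C.r_comp (hFsub hγ).symm).trans hαv)), α, hα, ?_⟩
  rintro p ⟨hpx, hpα⟩
  refine ⟨hpα, fun hp => ?_⟩
  obtain ⟨γ, hγ, hpγ⟩ := Set.mem_iUnion₂.1 hp
  exact hdisj.subset ⟨⟨(hFsub hγ).symm, hx.2.2.2 p hpx _ hpγ⟩, hγ⟩

theorem sdiff_biUnion_notMem_UC [Countable Λ] (hfa : FinitelyAligned C) {α : Λ}
    {y F : Set Λ} (hy : y ∈ lamStarStar C v) (hF : F.Finite)
    (hFex : ExhaustiveAt C (C.s α) F) :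
    pTail C α \ ⋃ γ ∈ F, pTail C (C.comp α γ) ∉ UC C v y := by
  rintro ⟨-, β, hβ, hβE⟩
  have hα : α ∈ y :=
    pHereditary_of_mem_lamStarStar hy β hβ α (hβE ⟨hβ, mem_pTail_self C β⟩).1
  obtain ⟨γ, ⟨-, hγy⟩, hγ⟩ :=
    inter_nonempty_of_exhaustive hfa (C.r_s α) (pShift_mem_lamStarStar hy hα) hF hFex
  obtain ⟨m, ⟨hmβ, hmγ⟩, hm⟩ := hy.2.1 β hβ _ hγy
  exact (hβE ⟨hm, hmβ⟩).2 (Set.mem_biUnion hγ hmγ)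

theorem exists_mem_lamStarStar_mem_UC (hfa : FinitelyAligned C) {x E : Set Λ}
    (hx : x ∈ lamStar C v) (hE : E ∈ UC C v x)
    (h : ∀ α ∈ x, ∃ α' ∈ x, α' ∈ pTail C α ∧
      ∀ F : Set Λ, F ⊆ pRng C (C.s α') → F.Finite → ExhaustiveAt C (C.s α') F →
        (pShift C α' x ∩ F).Nonempty) :
    ∃ y ∈ lamStarStar C v, E ∈ UC C v y := by
  obtain ⟨β, hβ, G, hG, hGx, hβE⟩ := containsBasicSet_of_mem_UC hx hE
  obtain ⟨α', hα', hα'β, hhit⟩ := h β hβ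
  obtain ⟨P, hP, hPsub, hPeq⟩ := hfa.exists_finite_pullback α' hG
  obtain ⟨e, he, heP⟩ : ∃ e, C.r e = C.s α' ∧ ∀ π ∈ P, ¬ pMeets C e π := by
    by_contra! hPex
    obtain ⟨π, ⟨-, hπx⟩, hπP⟩ := hhit P hPsub hP hPex
    have : C.comp α' π ∈ pTail C α' ∩ ⋃ γ ∈ G, pTail C γ :=
      hPeq ▸ Set.mem_biUnion hπP (mem_pTail_self C _)
    obtain ⟨γ, hγ, hπγ⟩ := Set.mem_iUnion₂.1 this.2
    exact hGx γ hγ (hx.2.2.2 _ hπx γ hπγ)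
  obtain ⟨z, hz, hez⟩ := exists_mem_lamStarStar_superset
    (Set.singleton_subset_iff.2 he) (pDirected_singleton C e)
  have hα'v : C.r α' = v := hx.2.1 hα'
  refine ⟨pMulStar C α' z, hα'v ▸ pMulStar_mem_lamStarStar hz, hE.1, α',
    self_mem_pMulStar hz, ?_⟩
  rintro δ ⟨hδz, hδα'⟩
  obtain ⟨ρ, hρ, hα'ρ, rfl⟩ :=
    exists_eq_comp_of_mem_pMulStar (pHereditary_of_mem_lamStarStar hz) hδz hδα'
  refine hβE ⟨mem_pTail_trans hδα' hα'β, fun hδG => ?_⟩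
  have : C.comp α' ρ ∈ ⋃ π ∈ P, pTail C (C.comp α' π) := hPeq ▸ ⟨hδα', hδG⟩
  obtain ⟨π, hπ, hρπ⟩ := Set.mem_iUnion₂.1 this
  obtain ⟨m, ⟨hme, hmρ⟩, -⟩ := hz.2.1 e (hez rfl) ρ hρ
  exact heP π hπ ⟨m, hme,
    mem_pTail_trans hmρ (mem_pTail_of_comp_mem_pTail_comp hα'ρ (hPsub hπ).symm hρπ)⟩

end Closure

/-- Theorem 7.2. `C ∈ vΛ*` lies in the closure of `vΛ**` in
`X_v` iff for every `α ∈ C` there is `α' ∈ C ∩ αΛ` such that `σ^{α'}(C)` meets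
every finite exhaustive subset of `s(α')Λ`. -/
theorem statement13 {Λ : Type u} [Countable Λ] (C : CategoryOfPaths Λ)
    (hfa : FinitelyAligned C) (v : Λ) (hv : C.r v = v)
    (x : Set Λ) (hx : x ∈ lamStar C v) :
    (⟨x, hx⟩ : Xv C v) ∈
        @closure _ (XvTop C v) {y : Xv C v | y.1 ∈ lamStarStar C v} ↔
      ∀ α ∈ x, ∃ α' ∈ x, α' ∈ pTail C α ∧
        ∀ F : Set Λ, F ⊆ pRng C (C.s α') → F.Finite → ExhaustiveAt C (C.s α') F →
          (pShift C α' x ∩ F).Nonempty := by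
  rw [mem_closure_iff_forall_mem_UC]
  constructor
  · intro hcl α hα
    refine ⟨α, hα, mem_pTail_self C α, fun F hFsub hF hFex => ?_⟩
    by_contra hdisj
    obtain ⟨y, hy, hyE⟩ := hcl _ (sdiff_biUnion_mem_UC hx hα hFsub hF
      (Set.not_nonempty_iff_eq_empty.1 hdisj))
    exact sdiff_biUnion_notMem_UC hfa hy hF hFex hyE
  · intro h E hE
    obtain ⟨y, hy, hyE⟩ := exists_mem_lamStarStar_mem_UC hfa hx hE h
    exact ⟨⟨y, mem_lamStar_of_mem_lamStarStar hv hy⟩, hy, hyE⟩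
end

section
/- Let Λ be a countable finitely aligned category of paths and let x ∈ ∂Λ. Then x is aperiodic if and only if σ^μ(x) is right-aperiodic for every μ ∈ x. -/
universe u v

variable {Λ : Type u}

section Aux

variable {Λ' : Type u}

lemma self_mem_pTail (C : CategoryOfPaths Λ') (α : Λ') : α ∈ pTail C α :=
  ⟨C.s α, (C.r_s α).symm, (C.comp_id α).symm⟩

/-- For `α ∈ x` with `x` directed and hereditary, `α · σ^α(x) = x`. -/
lemma mulStar_shift (C : CategoryOfPaths Λ') {x : Set Λ'}
    (hher : pHereditary C x) (hdir : pDirected C x) {α : Λ'} (hα : α ∈ x) :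
    pMulStar C α (pShift C α x) = x := by
  ext δ; constructor
  · rintro ⟨γ, ⟨hs, hmem⟩, hs', htail⟩
    exact hher _ hmem δ htail
  · intro hδ
    obtain ⟨ε, ⟨⟨hεδ, ⟨β2, hb2, he2⟩⟩, hεx⟩⟩ := hdir δ hδ α hα
    refine ⟨β2, ⟨hb2, ?_⟩, hb2, ?_⟩
    · rw [← he2]; exact hεx
    · rw [← he2]; exact hεδ

/-- `σ^α(α · y) = y` for hereditary `y` whose elements have range `s α`. -/
lemma shift_mulStar (C : CategoryOfPaths Λ') {y : Set Λ'}
    (hher : pHereditary C y) {α : Λ'} (h1 : ∀ γ ∈ y, C.s α = C.r γ) :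
    pShift C α (pMulStar C α y) = y := by
  ext γ; constructor
  · rintro ⟨hs, γ', hγ', hs', δ, hd1, hd2⟩
    have hsγ : C.s (C.comp α γ) = C.s γ := C.s_comp hs
    rw [hsγ] at hd1
    have hassoc : C.comp (C.comp α γ) δ = C.comp α (C.comp γ δ) := C.comp_assoc hs hd1
    have hγ'eq : γ' = C.comp γ δ := by
      refine C.left_cancel hs' ?_ (by rw [hd2, hassoc])
      rw [C.r_comp hd1]; exact hs
    exact hher γ' hγ' γ ⟨δ, hd1, hγ'eq⟩
  · intro hγ
    exact ⟨h1 γ hγ, ⟨γ, hγ, h1 γ hγ, self_mem_pTail C _⟩⟩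

lemma shift_hereditary (C : CategoryOfPaths Λ') {x : Set Λ'}
    (hher : pHereditary C x) (μ : Λ') : pHereditary C (pShift C μ x) := by
  rintro γ ⟨hs, hμγ⟩ δ ⟨ε, he1, he2⟩
  have hrδ : C.s μ = C.r δ := by rw [← C.r_comp he1, ← he2]; exact hs
  refine ⟨hrδ, ?_⟩
  have hcomp : C.comp μ γ = C.comp (C.comp μ δ) ε := by
    rw [he2, C.comp_assoc hrδ he1]
  refine hher _ hμγ _ ⟨ε, ?_, hcomp⟩
  rw [C.s_comp hrδ]; exact he1

lemma shift_shift (C : CategoryOfPaths Λ') {x : Set Λ'} {μ γ : Λ'}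
    (h : C.s μ = C.r γ) : pShift C γ (pShift C μ x) = pShift C (C.comp μ γ) x := by
  ext ε; simp only [pShift, Set.mem_setOf_eq]
  constructor
  · rintro ⟨h1, h2, h3⟩
    refine ⟨by rw [C.s_comp h]; exact h1, by rw [C.comp_assoc h h1]; exact h3⟩
  · rintro ⟨h1, h2⟩
    have h1' : C.s γ = C.r ε := by rw [← C.s_comp h]; exact h1
    exact ⟨h1', by rw [C.r_comp h1']; exact h, by rw [← C.comp_assoc h h1']; exact h2⟩

end Aux

/-- Lemma 8.5. A point `x ∈ ∂Λ` is aperiodic iff `σ^μ(x)` is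
right-aperiodic for every `μ ∈ x`. -/
theorem statement16 {Λ : Type u} [Countable Λ] (C : CategoryOfPaths Λ)
    (hfa : FinitelyAligned C) (v : Λ) (hv : C.r v = v)
    (x : Set Λ) (hx : x ∈ lamStar C v)
    (hbd : (Sigma.mk (⟨v, hv⟩ : Vertex C) (⟨x, hx⟩ : Xv C v) : Xtotal C) ∈ boundarySet C) :
    pAperiodic C x ↔ ∀ μ ∈ x, pRightAperiodicAt C (C.s μ) (pShift C μ x) := by
  obtain ⟨hne, hsub, hdir, hher⟩ := hx
  constructor
  · -- aperiodic → each σ^μ(x) right-aperiodic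
    intro hap μ hμ α β hsα hsβ hab heq
    set y := pShift C μ x with hy
    have hyher : pHereditary C y := shift_hereditary C hher μ
    have h1α : ∀ γ ∈ y, C.s α = C.r γ := fun γ hγ => hsα.trans hγ.1
    have h1β : ∀ γ ∈ y, C.s β = C.r γ := fun γ hγ => hsβ.trans hγ.1
    have hAy : pShift C α (pMulStar C α y) = y := shift_mulStar C hyher h1α
    have hBy : pShift C β (pMulStar C β y) = y := shift_mulStar C hyher h1β
    -- y is nonempty
    obtain ⟨ε0, ⟨⟨hεμ1, ⟨γ0, hγ0r, hγ0e⟩⟩, hε0x⟩⟩ := hdir μ hμ μ hμ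
    have hγ0y : γ0 ∈ y := ⟨hγ0r, by rw [← hγ0e]; exact hε0x⟩
    -- β ∈ β·y = α·y
    have hβmem : β ∈ pMulStar C β y :=
      ⟨γ0, hγ0y, hsβ.trans hγ0r, ⟨γ0, hsβ.trans hγ0r, rfl⟩⟩
    rw [← heq] at hβmem
    obtain ⟨γ, hγy, hsαγ, ⟨δ, hδ1, hδ2⟩⟩ := hβmem
    -- δ ∈ y
    have hαγmem : C.comp α γ ∈ pMulStar C α y := ⟨γ, hγy, hsαγ, self_mem_pTail C _⟩
    rw [heq] at hαγmem
    have hδy : δ ∈ y := by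
      rw [← hBy]; exact ⟨hδ1, by rw [← hδ2]; exact hαγmem⟩
    -- s γ = s δ
    have hsγδ : C.s γ = C.s δ := by
      rw [← C.s_comp hsαγ, hδ2, C.s_comp hδ1]
    -- γ ≠ δ
    have hγδ : γ ≠ δ := by
      intro h; subst h
      exact hab (C.right_cancel hsαγ hδ1 hδ2)
    -- σ^γ(y) = σ^δ(y)
    have key : ∀ ε, C.s γ = C.r ε → (C.comp γ ε ∈ y ↔ C.comp δ ε ∈ y) := by
      intro ε hε
      have hδε : C.s δ = C.r ε := by rw [← hsγδ]; exact hε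
      have e1 : C.comp α (C.comp γ ε) = C.comp β (C.comp δ ε) := by
        rw [← C.comp_assoc hsαγ hε, hδ2, C.comp_assoc hδ1 hδε]
      constructor
      · intro h
        rw [← hAy] at h
        obtain ⟨-, h2⟩ := h
        rw [heq, e1] at h2
        rw [← hBy]
        exact ⟨by rw [C.r_comp hδε]; exact hδ1, h2⟩
      · intro h
        rw [← hBy] at h
        obtain ⟨-, h2⟩ := h
        rw [← heq, ← e1] at h2
        rw [← hAy]
        exact ⟨by rw [C.r_comp hε]; exact hsαγ, h2⟩
    have hshift : pShift C γ y = pShift C δ y := by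
      ext ε
      constructor
      · rintro ⟨h1, h2⟩
        exact ⟨by rw [← hsγδ]; exact h1, (key ε h1).1 h2⟩
      · rintro ⟨h1, h2⟩
        have h1' : C.s γ = C.r ε := by rw [hsγδ]; exact h1
        exact ⟨h1', (key ε h1').2 h2⟩
    -- contradict aperiodicity of x
    have hμne : C.comp μ γ ≠ C.comp μ δ := by
      intro h
      exact hγδ (C.left_cancel hγy.1 hδy.1 h)
    refine hap _ hγy.2 _ hδy.2 hμne ?_
    rw [← shift_shift C hγy.1, ← shift_shift C hδy.1]
    exact hshift
  · -- converse
    intro h α hα β hβ hab heq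
    obtain ⟨ε, ⟨⟨⟨γ1, hg1, he1⟩, hεβ⟩, hεx⟩⟩ := hdir α hα β hβ
    have hγ1α : γ1 ∈ pShift C α x := ⟨hg1, by rw [← he1]; exact hεx⟩
    have hγ1β : γ1 ∈ pShift C β x := by rw [← heq]; exact hγ1α
    have hsab : C.s β = C.s α := hγ1β.1.trans hg1.symm
    have hA : pMulStar C α (pShift C α x) = x := mulStar_shift C hher hdir hα
    have hB : pMulStar C β (pShift C β x) = x := mulStar_shift C hher hdir hβ
    refine h α hα α β rfl hsab hab ?_
    rw [hA, heq, hB]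
end
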